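/- Let G be a (c−1)-atom and T_c(G) the graph on the maximal c-atoms and minimal clique separators of size at most c of G (edges given by inclusion C ⊆ A). If A₁, C₁, A₂, …, C_{t−1}, A_t is a path in T_c(G) alternating between maximal c-atoms and separators, then for every i ≥ 2 the atom A_i contains no vertex of A₁ \ A₂. Consequently T_c(G) is acyclic. -/

import Mathlib

variable {V : Type*}

/-- `C` separates `x` and `y` in `G`: neither endpoint is in `C` and every walk
from `x` to `y` meets `C`. -/
def Separates (G : SimpleGraph V) (C : Set V) (x y : V) : Prop :=
  x ∉ C ∧ y ∉ C ∧ ∀ p : G.Walk x y, ∃ z ∈ C, z ∈ p.support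

/-- `x` and `y` are `c`-inseparable in `G`: no clique of size at most `c` separates them. -/
def CInsep (G : SimpleGraph V) (c : ℕ) (x y : V) : Prop :=
  ∀ C : Set V, G.IsClique C → C.ncard ≤ c → ¬ Separates G C x y

/-- A set is `c`-inseparable if all its pairs of vertices are. -/
def InsepSet (G : SimpleGraph V) (c : ℕ) (A : Set V) : Prop :=
  ∀ x ∈ A, ∀ y ∈ A, CInsep G c x y

/-- Maximal `c`-inseparable set. -/
def MaxInsepSet (G : SimpleGraph V) (c : ℕ) (A : Set V) : Prop :=
  InsepSet G c A ∧ ∀ B, A ⊆ B → InsepSet G c B → B = A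

/-- `C` separates `x` and `y` within the induced subgraph `G[A]`. -/
def SeparatesWithin (G : SimpleGraph V) (A C : Set V) (x y : V) : Prop :=
  x ∈ A \ C ∧ y ∈ A \ C ∧
    ∀ p : G.Walk x y, (∀ z ∈ p.support, z ∈ A) → ∃ z ∈ C, z ∈ p.support

/-- `G[A]` is a `c`-atom: it has no clique separator of size at most `c`. -/
def AtomWithin (G : SimpleGraph V) (c : ℕ) (A : Set V) : Prop :=
  ¬ ∃ C : Set V, C ⊆ A ∧ G.IsClique C ∧ C.ncard ≤ c ∧ ∃ x y, SeparatesWithin G A C x y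

/-- `G[A]` is a maximal `c`-atom of `G`. -/
def MaxAtom (G : SimpleGraph V) (c : ℕ) (A : Set V) : Prop :=
  AtomWithin G c A ∧ ∀ B, A ⊆ B → AtomWithin G c B → B = A

/-- `C` is an inclusion-wise minimal clique separator of size at most `c`:
a clique of size at most `c` that separates some pair of vertices and is
inclusion-minimal among cliques separating that pair. -/
def MinCliqueSep (G : SimpleGraph V) (c : ℕ) (C : Set V) : Prop :=
  G.IsClique C ∧ C.ncard ≤ c ∧
    ∃ x y : V, Separates G C x y ∧
      ∀ C' ⊆ C, G.IsClique C' → Separates G C' x y → C' = C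

/-- Nodes of `T_c(G)` corresponding to maximal `c`-atoms (equivalently, maximal
`c`-inseparable vertex sets). -/
def AtomNode (G : SimpleGraph V) (c : ℕ) : Type _ := {A : Set V // MaxInsepSet G c A}

/-- Nodes of `T_c(G)` corresponding to minimal clique separators of size at most `c`. -/
def SepNode (G : SimpleGraph V) (c : ℕ) : Type _ := {C : Set V // MinCliqueSep G c C}

/-- The bipartite incidence graph `T_c(G)`: a maximal `c`-atom `A` is joined to a
minimal clique separator `C` exactly when `C ⊆ A`. -/
def TcGraph (G : SimpleGraph V) (c : ℕ) : SimpleGraph (AtomNode G c ⊕ SepNode G c) where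
  Adj n m :=
    (∃ (A : AtomNode G c) (C : SepNode G c),
        n = Sum.inl A ∧ m = Sum.inr C ∧ C.val ⊆ A.val) ∨
    (∃ (A : AtomNode G c) (C : SepNode G c),
        n = Sum.inr C ∧ m = Sum.inl A ∧ C.val ⊆ A.val)
  symm := by
    constructor
    rintro n m (⟨A, C, rfl, rfl, h⟩ | ⟨A, C, rfl, rfl, h⟩)
    · exact Or.inr ⟨A, C, rfl, rfl, h⟩
    · exact Or.inl ⟨A, C, rfl, rfl, h⟩
  loopless := by
    constructor
    rintro n (⟨A, C, rfl, h, -⟩ | ⟨A, C, rfl, h, -⟩) <;> exact absurd h (by simp)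

/-- `G` has no clique separator of size at most `c - 1`. -/
def NoSmallCliqueSep (G : SimpleGraph V) (c : ℕ) : Prop :=
  ∀ C : Set V, G.IsClique C → C.ncard ≤ c - 1 → ¬ ∃ x y, Separates G C x y

/-! Every minimal clique separator `C₀` has exactly `c` vertices, as no smaller clique
separates. Two distinct maximal `c`-inseparable sets containing `C₀` are then never joined
by a walk of `G - C₀`: otherwise their union would still be `c`-inseparable. On the other
hand, along a walk of `T_c(G)` avoiding the node `C₀`, each separator `D ≠ C₀`, having the
same size, has a vertex outside `C₀`, so the parts outside `C₀` of all atoms on the walk lie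
in one component of `G - C₀`. A path `A₁, C₁, A₂, …` gives such a walk from `A₂` to `A_i`
avoiding `C₁`, and a cycle through `C₀` one between the two neighbours of `C₀`. -/

section

open SimpleGraph

variable {G : SimpleGraph V} {c : ℕ} {A B C : Set V} {x y : V}

def ReachableAvoiding (G : SimpleGraph V) (C : Set V) (x y : V) : Prop :=
  ∃ p : G.Walk x y, ∀ z ∈ p.support, z ∉ C

theorem ReachableAvoiding.symm (h : ReachableAvoiding G C x y) : ReachableAvoiding G C y x :=
  let ⟨p, hp⟩ := h
  ⟨p.reverse, fun z hz => hp z (by simpa using hz)⟩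

theorem ReachableAvoiding.trans {z : V} (hxy : ReachableAvoiding G C x y)
    (hyz : ReachableAvoiding G C y z) : ReachableAvoiding G C x z :=
  let ⟨p, hp⟩ := hxy
  let ⟨q, hq⟩ := hyz
  ⟨p.append q, fun w hw => (p.mem_support_append_iff q).1 hw |>.elim (hp w) (hq w)⟩

theorem Separates.symm (h : Separates G C x y) : Separates G C y x :=
  ⟨h.2.1, h.1, fun p => by simpa using h.2.2 p.reverse⟩

theorem Separates.not_reachableAvoiding (h : Separates G C x y) :
    ¬ ReachableAvoiding G C x y := fun ⟨p, hp⟩ =>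
  let ⟨z, hzC, hz⟩ := h.2.2 p
  hp z hz hzC

theorem CInsep.symm (h : CInsep G c x y) : CInsep G c y x :=
  fun C hC hCc hsep => h C hC hCc hsep.symm

theorem CInsep.reachableAvoiding (h : CInsep G c x y) (hC : G.IsClique C) (hCc : C.ncard ≤ c)
    (hx : x ∉ C) (hy : y ∉ C) : ReachableAvoiding G C x y := by
  by_contra hxy
  refine h C hC hCc ⟨hx, hy, fun p => ?_⟩
  by_contra! hp
  exact hxy ⟨p, fun z hz hzC => hp z hzC hz⟩

theorem InsepSet.reachableAvoiding (hS : InsepSet G c A) (hC : G.IsClique C) (hCc : C.ncard ≤ c)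
    (hx : x ∈ A \ C) (hy : y ∈ A \ C) : ReachableAvoiding G C x y :=
  (hS x hx.1 y hy.1).reachableAvoiding hC hCc hx.2 hy.2

/-- A clique `D` of size at most `c = |C|` separating `x ∈ A` from `y ∈ B` either misses a
vertex of `C ⊆ A ∩ B`, through which `x` reaches `y`, or is `C` itself. -/
theorem InsepSet.union [Finite V] (hA : InsepSet G c A) (hB : InsepSet G c B)
    (hC : G.IsClique C) (hCc : C.ncard = c) (hCA : C ⊆ A) (hCB : C ⊆ B)
    (ha : x ∈ A \ C) (hb : y ∈ B \ C) (hxy : ReachableAvoiding G C x y) :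
    InsepSet G c (A ∪ B) := by
  have cross : ∀ a ∈ A, ∀ b ∈ B, CInsep G c a b := by
    intro a ha' b hb' D hD hDc hsep
    apply hsep.not_reachableAvoiding
    by_cases hCD : C ⊆ D
    · obtain rfl : C = D := Set.eq_of_subset_of_ncard_le hCD (hCc ▸ hDc)
      exact ((hA.reachableAvoiding hC hCc.le ⟨ha', hsep.1⟩ ha).trans hxy).trans
        (hB.reachableAvoiding hC hCc.le hb ⟨hb', hsep.2.1⟩)
    · obtain ⟨w, hwC, hwD⟩ := Set.not_subset.mp hCD
      exact (hA.reachableAvoiding hD hDc ⟨ha', hsep.1⟩ ⟨hCA hwC, hwD⟩).trans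
        (hB.reachableAvoiding hD hDc ⟨hCB hwC, hwD⟩ ⟨hb', hsep.2.1⟩)
  rintro a (ha' | ha') b (hb' | hb')
  · exact hA a ha' b hb'
  · exact cross a ha' b hb'
  · exact (cross b hb' a ha').symm
  · exact hB a ha' b hb'

theorem MaxInsepSet.eq_of_reachableAvoiding [Finite V] (hA : MaxInsepSet G c A)
    (hB : MaxInsepSet G c B) (hC : G.IsClique C) (hCc : C.ncard = c) (hCA : C ⊆ A)
    (hCB : C ⊆ B) (ha : x ∈ A \ C) (hb : y ∈ B \ C) (hxy : ReachableAvoiding G C x y) :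
    A = B := by
  have hU := hA.1.union hB.1 hC hCc hCA hCB ha hb hxy
  exact (hA.2 _ Set.subset_union_left hU).symm.trans (hB.2 _ Set.subset_union_right hU)

theorem MaxInsepSet.diff_nonempty (hA : MaxInsepSet G c A) (hB : MaxInsepSet G c B)
    (hAB : A ≠ B) (hCB : C ⊆ B) : (A \ C).Nonempty :=
  Set.sdiff_nonempty.2 fun hAC => hAB (hA.2 B (hAC.trans hCB) hB.1).symm

theorem MinCliqueSep.ncard_eq (hG : NoSmallCliqueSep G c) (hC : MinCliqueSep G c C) :
    C.ncard = c := by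
  obtain ⟨hCq, hCc, x, y, hxy, -⟩ := hC
  by_contra hne
  exact hG C hCq (by omega) ⟨x, y, hxy⟩

theorem SepNode.diff_nonempty [Finite V] (hG : NoSmallCliqueSep G c) {C D : SepNode G c}
    (hDC : D ≠ C) : (D.val \ C.val).Nonempty :=
  Set.sdiff_nonempty.2 fun h => hDC <| Subtype.ext <| Set.eq_of_subset_of_ncard_le h <| by
    rw [C.prop.ncard_eq hG, D.prop.ncard_eq hG]

namespace TcGraph

def bag : AtomNode G c ⊕ SepNode G c → Set V :=
  Sum.elim Subtype.val Subtype.val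

@[simp]
theorem adj_inl_inr {A : AtomNode G c} {C : SepNode G c} :
    (TcGraph G c).Adj (.inl A) (.inr C) ↔ C.val ⊆ A.val := by
  simp [TcGraph]

@[simp]
theorem adj_inr_inl {A : AtomNode G c} {C : SepNode G c} :
    (TcGraph G c).Adj (.inr C) (.inl A) ↔ C.val ⊆ A.val := by
  simp [TcGraph]

@[simp]
theorem not_adj_inl_inl {A A' : AtomNode G c} : ¬ (TcGraph G c).Adj (.inl A) (.inl A') := by
  simp [TcGraph]

@[simp]
theorem not_adj_inr_inr {C C' : SepNode G c} : ¬ (TcGraph G c).Adj (.inr C) (.inr C') := by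
  simp [TcGraph]

variable [Finite V] {C₀ : SepNode G c} {u : V}

/-- A separator `D ≠ C₀` has a vertex outside `C₀`, through which all of an atom `A ⊇ D` is
reached. -/
theorem reachableAvoiding_of_adj (hG : NoSmallCliqueSep G c) {n m : AtomNode G c ⊕ SepNode G c}
    (hnm : (TcGraph G c).Adj n m) (hn : n ≠ .inr C₀)
    (h : ∀ v ∈ bag n \ C₀.val, ReachableAvoiding G C₀.val v u) :
    ∀ v ∈ bag m \ C₀.val, ReachableAvoiding G C₀.val v u := by
  rcases hnm with ⟨A, D, rfl, rfl, hDA⟩ | ⟨A, D, rfl, rfl, hDA⟩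
  · exact fun v hv => h v ⟨hDA hv.1, hv.2⟩
  · obtain ⟨w, hw⟩ := SepNode.diff_nonempty hG fun hD => hn (congrArg _ hD)
    exact fun v hv => (A.prop.1.reachableAvoiding C₀.prop.1 C₀.prop.2.1 hv
      ⟨hDA hw.1, hw.2⟩).trans (h w hw)

theorem reachableAvoiding_of_walk (hG : NoSmallCliqueSep G c) {n m : AtomNode G c ⊕ SepNode G c}
    (p : (TcGraph G c).Walk n m) (hp : .inr C₀ ∉ p.support)
    (h : ∀ v ∈ bag n \ C₀.val, ReachableAvoiding G C₀.val v u) :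
    ∀ v ∈ bag m \ C₀.val, ReachableAvoiding G C₀.val v u := by
  induction p with
  | nil => exact h
  | cons hadj p ih =>
    rw [Walk.support_cons, List.mem_cons, not_or] at hp
    exact ih hp.2 (reachableAvoiding_of_adj hG hadj (Ne.symm hp.1) h)

theorem eq_of_walk (hG : NoSmallCliqueSep G c) {A B : AtomNode G c} (hA : C₀.val ⊆ A.val)
    (hB : C₀.val ⊆ B.val)
    (p : (TcGraph G c).Walk (.inl A) (.inl B)) (hp : .inr C₀ ∉ p.support) : A = B := by
  by_contra hAB
  have hne : A.val ≠ B.val := fun h => hAB (Subtype.ext h)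
  obtain ⟨a, ha⟩ := MaxInsepSet.diff_nonempty A.prop B.prop hne hB
  obtain ⟨b, hb⟩ := MaxInsepSet.diff_nonempty B.prop A.prop hne.symm hA
  have hreach := reachableAvoiding_of_walk hG p hp fun v hv =>
    A.prop.1.reachableAvoiding C₀.prop.1 C₀.prop.2.1 hv ha
  exact hne (MaxInsepSet.eq_of_reachableAvoiding A.prop B.prop C₀.prop.1 (C₀.prop.ncard_eq hG)
    hA hB ha hb (hreach b hb).symm)

theorem isAcyclic (hG : NoSmallCliqueSep G c) : (TcGraph G c).IsAcyclic := by
  classical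
  suffices h : ∀ (C₀ : SepNode G c) (p : (TcGraph G c).Walk (.inr C₀) (.inr C₀)),
      ¬ p.IsCycle by
    rintro (A | C₀) p hp
    · cases p with
      | nil => exact hp.not_nil .nil
      | @cons _ y _ hadj q =>
        rcases y with A' | D
        · simp at hadj
        · exact h D _ (hp.rotate (by simp))
    · exact h C₀ p hp
  intro C₀ p hp
  cases p with
  | nil => exact hp.not_nil .nil
  | @cons _ y _ hadj q =>
    rcases y with A₁ | D
    · obtain ⟨hq, hedge⟩ := (Walk.cons_isCycle_iff q hadj).1 hp
      rw [← List.mem_reverse, ← Walk.edges_reverse] at hedge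
      rw [← Walk.isPath_reverse_iff] at hq
      -- the reversed path starts with the closing edge `C₀ — Aₖ` of the cycle
      generalize q.reverse = r at hq hedge
      cases r with
      | @cons _ y _ hadj' r =>
        rcases y with Aₖ | D
        · rw [Walk.cons_isPath_iff] at hq
          obtain rfl := eq_of_walk hG (adj_inr_inl.1 hadj') (adj_inr_inl.1 hadj) r hq.2
          obtain rfl := Walk.eq_nil_iff_nil.2 (Walk.isPath_iff_nil.1 hq.1)
          simp at hedge
        · simp at hadj'
    · simp at hadj

theorem reachableAvoiding_of_chain (hG : NoSmallCliqueSep G c) {t : ℕ}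
    (A : Fin (t + 1) → AtomNode G c) (C : Fin t → SepNode G c)
    (hinc : ∀ i, (C i).val ⊆ (A i.castSucc).val ∧ (C i).val ⊆ (A i.succ).val)
    (hC : ∀ i, C i ≠ C₀)
    (h : ∀ v ∈ (A 0).val \ C₀.val, ReachableAvoiding G C₀.val v u) :
    ∀ i, ∀ v ∈ (A i).val \ C₀.val, ReachableAvoiding G C₀.val v u := by
  refine Fin.induction h fun i hi => ?_
  have hCi :=
    reachableAvoiding_of_adj hG (m := .inr (C i)) (adj_inl_inr.2 (hinc i).1) (by simp) hi
  exact reachableAvoiding_of_adj hG (adj_inr_inl.2 (hinc i).2) (by simpa using hC i) hCi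

theorem inter_diff_eq_empty (hG : NoSmallCliqueSep G c) {t : ℕ} (A : Fin (t + 2) → AtomNode G c)
    (C : Fin (t + 1) → SepNode G c)
    (hA : Function.Injective A) (hC : Function.Injective C)
    (hinc : ∀ i, (C i).val ⊆ (A i.castSucc).val ∧ (C i).val ⊆ (A i.succ).val)
    {i : Fin (t + 2)} (hi : i ≠ 0) : (A i).val ∩ ((A 0).val \ (A 1).val) = ∅ := by
  obtain ⟨j, rfl⟩ := Fin.exists_succ_eq.2 hi
  have h01 : (A 0).val ≠ (A 1).val := fun h => zero_ne_one (hA (Subtype.ext h))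
  have hC0 : (C 0).val ⊆ (A 0).val := (hinc 0).1
  have hC1 : (C 0).val ⊆ (A 1).val := (hinc 0).2
  obtain ⟨u, hu⟩ := MaxInsepSet.diff_nonempty (A 1).prop (A 0).prop h01.symm hC0
  have hreach := reachableAvoiding_of_chain hG (fun i => A i.succ) (fun i => C i.succ)
    (fun i => by rw [Fin.succ_castSucc]; exact hinc i.succ) (fun i h => Fin.succ_ne_zero i (hC h))
    (fun v hv => (A 1).prop.1.reachableAvoiding (C 0).prop.1 (C 0).prop.2.1 hv hu) j
  refine Set.eq_empty_of_forall_notMem fun x ⟨hxj, hx0, hx1⟩ => h01 ?_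
  have hxC : x ∉ (C 0).val := fun h => hx1 (hC1 h)
  exact MaxInsepSet.eq_of_reachableAvoiding (A 0).prop (A 1).prop (C 0).prop.1
    ((C 0).prop.ncard_eq hG) hC0 hC1 ⟨hx0, hxC⟩ hu (hreach x ⟨hxj, hxC⟩)

end TcGraph

end

/-- Along any path `A₁, C₁, A₂, …, C_{t-1}, A_t` in `T_c(G)` (with distinct atoms
and distinct separators, consecutive ones incident), every atom `A_i` with `i ≥ 2`
avoids `A₁ \ A₂`; consequently `T_c(G)` is acyclic. -/
theorem stmt12 [Fintype V] (G : SimpleGraph V) (c : ℕ)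
    (hatom : NoSmallCliqueSep G c) :
    (∀ (t : ℕ) (ht : 1 ≤ t) (A : Fin (t + 1) → AtomNode G c) (C : Fin t → SepNode G c),
      Function.Injective A → Function.Injective C →
      (∀ i : Fin t, (C i).val ⊆ (A i.castSucc).val ∧ (C i).val ⊆ (A i.succ).val) →
      ∀ i : Fin (t + 1), i ≠ 0 →
        (A i).val ∩ ((A 0).val \ (A ⟨1, by omega⟩).val) = ∅) ∧
    (TcGraph G c).IsAcyclic := by
  refine ⟨fun t ht A C hA hC hinc i hi => ?_, TcGraph.isAcyclic hatom⟩
  obtain ⟨s, rfl⟩ : ∃ s, t = s + 1 := ⟨t - 1, by omega⟩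
  exact TcGraph.inter_diff_eq_empty hatom A C hA hC hinc hi
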